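/- The automorphism σ induces an R-algebra automorphism σ̄ of the quotient A/J (so that σ̄(a + J) = σ(a) + J), and the R-algebra homomorphism from A^σ/(J ∩ A^σ) to the fixed-point subalgebra (A/J)^{σ̄} induced by the inclusion A^σ ↪ A followed by the quotient map is an isomorphism; in particular, the fixed-point subalgebra of A/J under σ̄ is isomorphic to the quotient of the fixed-point subalgebra A^σ by the ideal J ∩ A^σ. -/

import Mathlib

/-! Since `σ` preserves `J` it descends to `A/J`. If the class of `a` is fixed, then
`σ a ≡ a` modulo `J`, hence `σ^i a ≡ a` for all `i`, and the average `p⁻¹ • ∑_{i<p} σ^i a` is a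
`σ`-fixed element of the same class: `σ` permutes its summands because `σ^p = 1`. -/

variable {R : Type*} [CommRing R] {A : Type*} [Ring A] [Algebra R A]

/-- The quotient of `A` by the two-sided ideal `J`, as a ring. -/
abbrev TwoSidedIdeal.Quot (J : TwoSidedIdeal A) : Type _ := J.ringCon.Quotient

/-- The `R`-algebra structure on the quotient `A/J`. -/
noncomputable instance (J : TwoSidedIdeal A) : Algebra R J.Quot :=
  RingHom.toAlgebra' ((RingCon.mk' J.ringCon).comp (algebraMap R A)) (by
    intro r x
    induction x using Quotient.inductionOn' with
    | h a =>
      show ((algebraMap R A r : A) : J.ringCon.Quotient) * (a : J.ringCon.Quotient)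
          = (a : J.ringCon.Quotient) * ((algebraMap R A r : A) : J.ringCon.Quotient)
      rw [← RingCon.coe_mul, ← RingCon.coe_mul, Algebra.commutes])

namespace TwoSidedIdeal

theorem mk_eq_mk_iff (J : TwoSidedIdeal A) {a b : A} :
    (a : J.ringCon.Quotient) = b ↔ a - b ∈ J :=
  J.ringCon.eq.trans (J.rel_iff a b)

theorem mk_eq_zero_iff (J : TwoSidedIdeal A) {a : A} : (a : J.ringCon.Quotient) = 0 ↔ a ∈ J := by
  simpa using J.mk_eq_mk_iff (b := 0)

noncomputable def quotCongr {B : Type*} [Ring B] [Algebra R B] (e : A ≃ₐ[R] B)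
    {I : TwoSidedIdeal A} {J : TwoSidedIdeal B} (h : ∀ x, x ∈ I ↔ e x ∈ J) :
    I.Quot ≃ₐ[R] J.Quot :=
  AlgEquiv.ofRingEquiv (f := RingCon.congr e.toRingEquiv <| RingCon.ext fun x y => by
      rw [RingCon.comap_rel, rel_iff, rel_iff, h, map_sub]; rfl)
    fun r => congrArg _ (e.commutes r)

end TwoSidedIdeal

namespace AlgEquiv

variable {σ : A ≃ₐ[R] A}

theorem apply_sum_range_pow_apply {p : ℕ} (hσ : σ ^ p = 1) (a : A) :
    σ (∑ i ∈ Finset.range p, (σ ^ i) a) = ∑ i ∈ Finset.range p, (σ ^ i) a := by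
  have hshift := Finset.sum_range_succ' (fun i => (σ ^ i) a) p
  rw [Finset.sum_range_succ, hσ, pow_zero, add_left_inj] at hshift
  simp only [map_sum, ← AlgEquiv.mul_apply, ← pow_succ']
  exact hshift.symm

theorem pow_apply_sub_mem {J : TwoSidedIdeal A} (hJ : ∀ x ∈ J, σ x ∈ J) {a : A}
    (ha : σ a - a ∈ J) (n : ℕ) : (σ ^ n) a - a ∈ J := by
  induction n with
  | zero => simp
  | succ n ih =>
    have hsplit : (σ ^ (n + 1)) a - a = σ ((σ ^ n) a - a) + (σ a - a) := by
      rw [pow_succ', AlgEquiv.mul_apply, map_sub]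
      abel
    rw [hsplit]
    exact J.add_mem (hJ _ ih) ha

theorem exists_fixed_sub_mem {p : ℕ} (hpR : IsUnit (p : R)) (hσ : σ ^ p = 1)
    {J : TwoSidedIdeal A} (hJ : ∀ x ∈ J, σ x ∈ J) {a : A} (ha : σ a - a ∈ J) :
    ∃ b, σ b = b ∧ b - a ∈ J := by
  set c : R := ↑hpR.unit⁻¹
  have hc : c * p = 1 := hpR.val_inv_mul
  refine ⟨c • ∑ i ∈ Finset.range p, (σ ^ i) a,
    by rw [map_smul, σ.apply_sum_range_pow_apply hσ], ?_⟩
  have hdiff : c • ∑ i ∈ Finset.range p, (σ ^ i) a - a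
      = algebraMap R A c * ∑ i ∈ Finset.range p, ((σ ^ i) a - a) := by
    rw [← Algebra.smul_def, Finset.sum_sub_distrib, Finset.sum_const, Finset.card_range,
      smul_sub, ← Nat.cast_smul_eq_nsmul R, smul_smul, hc, one_smul]
  rw [hdiff]
  exact J.mul_mem_left _ _ (J.finsetSum_mem _ _ fun i _ => pow_apply_sub_mem hJ ha i)

end AlgEquiv

theorem fixedPoints_quotient_iso
    (p : ℕ) (hpR : IsUnit (p : R))
    (σ : A ≃ₐ[R] A) (hσ : σ ^ p = 1)
    (J : TwoSidedIdeal A) (hJ : ∀ x : A, x ∈ J ↔ σ x ∈ J) :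
    ∃ σbar : J.Quot ≃ₐ[R] J.Quot,
      (∀ a : A, σbar ((a : J.ringCon.Quotient)) = ((σ a : A) : J.ringCon.Quotient)) ∧
      (∀ τ : J.Quot ≃ₐ[R] J.Quot,
        (∀ a : A, τ ((a : J.ringCon.Quotient)) = ((σ a : A) : J.ringCon.Quotient)) →
          τ = σbar) ∧
      (Set.range (fun x : {a : A // σ a = a} => ((x : A) : J.ringCon.Quotient))
        = {y : J.Quot | σbar y = y}) ∧
      (∀ x : {a : A // σ a = a}, ((x : A) : J.ringCon.Quotient) = 0 ↔ (x : A) ∈ J) := by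
  let σbar := TwoSidedIdeal.quotCongr σ hJ
  refine ⟨σbar, fun _ => rfl, fun τ hτ => AlgEquiv.ext (J.ringCon.mk'_surjective.forall.2 hτ),
    ?_, fun x => J.mk_eq_zero_iff⟩
  ext y
  constructor
  · rintro ⟨⟨b, hb⟩, rfl⟩
    exact congrArg _ hb
  · intro hy
    obtain ⟨a, rfl⟩ := J.ringCon.mk'_surjective y
    obtain ⟨b, hb, hba⟩ := σ.exists_fixed_sub_mem hpR hσ (fun x => (hJ x).1) (J.mk_eq_mk_iff.1 hy)
    exact ⟨⟨b, hb⟩, J.mk_eq_mk_iff.2 hba⟩
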